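/- arXiv:1411.3442 — 2 statements merged into one kernel-verified Lean document; each statement's English description precedes it below -/
import Mathlib

section
/- Let m > n ≥ 1 be integers, a > 0 and b ≥ 0 reals, and let S_N be the set of pairs (x, y) of reals with 1 ≤ y ≤ x ≤ N and a·yᵐ ≥ a·xᵐ − b·Nⁿ. Then the two-dimensional Lebesgue measure of S_N is o(N²) as N → ∞, i.e., lim_{N→∞} area(S_N)/N² = 0. -/
open MeasureTheory Filter Set Topology

/-! If `ε N < x`, then `a (x - y) x ^ (m - 1) ≤ a (x ^ m - y ^ m) ≤ b N ^ n` and, since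
`n ≤ m - 1`, `ε ^ (m - 1) N ^ n ≤ x ^ (m - 1)`; so `x - y ≤ b / (a ε ^ (m - 1))`. Hence the region
lies in the square `[0, εN]²` together with a diagonal strip of bounded width over `[0, N]`, and
its area is at most `ε² N² + O_ε(N)`. -/

theorem MeasureTheory.Measure.prod_setOf_fst_mem_sub_mem {G : Type*} [AddGroup G]
    [MeasurableSpace G] [MeasurableAdd₂ G] [MeasurableNeg G] (μ ν : Measure G) [SFinite μ]
    [SFinite ν] [ν.IsAddRightInvariant] {s t : Set G} (hs : MeasurableSet s)
    (ht : MeasurableSet t) :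
    μ.prod ν {p | p.1 ∈ s ∧ p.2 - p.1 ∈ t} = μ s * ν t := by
  rw [← Measure.prod_prod]
  exact (measurePreserving_prod_sub μ ν).measure_preimage (hs.prod ht).nullMeasurableSet

theorem sub_mul_pow_le_pow_succ_sub_pow_succ {x y : ℝ} (hy : 0 ≤ y) (hyx : y ≤ x) (k : ℕ) :
    (x - y) * x ^ k ≤ x ^ (k + 1) - y ^ (k + 1) := by
  have := pow_le_pow_left₀ hy hyx k
  rw [pow_succ', pow_succ']
  nlinarith

def powerGapRegion (a b : ℝ) (m n : ℕ) (N : ℝ) : Set (ℝ × ℝ) :=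
  {p | 1 ≤ p.2 ∧ p.2 ≤ p.1 ∧ p.1 ≤ N ∧ a * p.2 ^ m ≥ a * p.1 ^ m - b * N ^ n}

section powerGapRegion

variable {a b : ℝ} {m n : ℕ} {N : ℝ}

theorem sub_le_of_mem_powerGapRegion (hmn : n < m) (ha : 0 < a) (hN : 1 ≤ N)
    {ε : ℝ} (hε : 0 < ε) {p : ℝ × ℝ} (hp : p ∈ powerGapRegion a b m n N)
    (hx : ε * N < p.1) :
    p.1 - p.2 ≤ b / (a * ε ^ (m - 1)) := by
  obtain ⟨hy1, hyx, -, hgap⟩ := hp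
  obtain ⟨k, rfl⟩ : ∃ k, m = k + 1 := ⟨m - 1, by omega⟩
  rw [Nat.add_sub_cancel, le_div_iff₀ (by positivity)]
  have hNn : 0 < N ^ n := by positivity
  have hεN : ε ^ k * N ^ n ≤ p.1 ^ k :=
    calc ε ^ k * N ^ n ≤ ε ^ k * N ^ k := by gcongr; omega
      _ = (ε * N) ^ k := (mul_pow _ _ _).symm
      _ ≤ p.1 ^ k := by gcongr
  have hmean := sub_mul_pow_le_pow_succ_sub_pow_succ (by linarith) hyx k
  have hgap' : a * ((p.1 - p.2) * (ε ^ k * N ^ n)) ≤ b * N ^ n :=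
    calc a * ((p.1 - p.2) * (ε ^ k * N ^ n)) ≤ a * ((p.1 - p.2) * p.1 ^ k) := by gcongr
      _ ≤ a * (p.1 ^ (k + 1) - p.2 ^ (k + 1)) := by gcongr
      _ ≤ b * N ^ n := by linarith
  exact le_of_mul_le_mul_right (by linarith) hNn

theorem powerGapRegion_subset (hmn : n < m) (ha : 0 < a) (hN : 1 ≤ N) {ε : ℝ} (hε : 0 < ε) :
    powerGapRegion a b m n N ⊆ Icc 0 (ε * N) ×ˢ Icc 0 (ε * N) ∪
      {p | p.1 ∈ Icc 0 N ∧ p.2 - p.1 ∈ Icc (-(b / (a * ε ^ (m - 1)))) 0} := by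
  intro p hp
  obtain ⟨hy1, hyx, hxN, -⟩ := id hp
  rcases le_or_gt p.1 (ε * N) with hx | hx
  · exact Or.inl ⟨⟨by linarith, hx⟩, ⟨by linarith, hyx.trans hx⟩⟩
  · have := sub_le_of_mem_powerGapRegion hmn ha hN hε hp hx
    exact Or.inr ⟨⟨by linarith, hxN⟩, ⟨by linarith, by linarith⟩⟩

theorem volume_powerGapRegion_le (hmn : n < m) (ha : 0 < a) (hb : 0 ≤ b) (hN : 1 ≤ N)
    {ε : ℝ} (hε : 0 < ε) :
    volume (powerGapRegion a b m n N) ≤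
      ENNReal.ofReal ((ε * N) ^ 2 + N * (b / (a * ε ^ (m - 1)))) := by
  set C := b / (a * ε ^ (m - 1))
  have hC : 0 ≤ C := by positivity
  have hεN : 0 ≤ ε * N := by positivity
  calc volume (powerGapRegion a b m n N)
      ≤ volume (Icc 0 (ε * N) ×ˢ Icc 0 (ε * N)) +
          volume {p : ℝ × ℝ | p.1 ∈ Icc 0 N ∧ p.2 - p.1 ∈ Icc (-C) 0} :=
        (measure_mono (powerGapRegion_subset hmn ha hN hε)).trans (measure_union_le _ _)
    _ = ENNReal.ofReal ((ε * N) ^ 2 + N * C) := by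
        rw [Measure.volume_eq_prod, Measure.prod_prod,
          Measure.prod_setOf_fst_mem_sub_mem _ _ measurableSet_Icc measurableSet_Icc]
        simp only [Real.volume_Icc, sub_zero, sub_neg_eq_add, zero_add]
        rw [← ENNReal.ofReal_mul hεN, ← ENNReal.ofReal_mul (by linarith),
          ← ENNReal.ofReal_add (by positivity) (by positivity), sq]

theorem volume_powerGapRegion_div_sq_le (hmn : n < m) (ha : 0 < a) (hb : 0 ≤ b) (hN : 1 ≤ N)
    {ε : ℝ} (hε : 0 < ε) :
    (volume (powerGapRegion a b m n N)).toReal / N ^ 2 ≤ ε ^ 2 + b / (a * ε ^ (m - 1)) / N := by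
  have hN0 : 0 < N := by linarith
  calc (volume (powerGapRegion a b m n N)).toReal / N ^ 2
      ≤ ((ε * N) ^ 2 + N * (b / (a * ε ^ (m - 1)))) / N ^ 2 := by
        gcongr
        exact ENNReal.toReal_le_of_le_ofReal (by positivity)
          (volume_powerGapRegion_le hmn ha hb hN hε)
    _ = ε ^ 2 + b / (a * ε ^ (m - 1)) / N := by field_simp

end powerGapRegion

theorem stmt_9_general (m n : ℕ) (hmn : n < m) (a b : ℝ) (ha : 0 < a) (hb : 0 ≤ b) :
    Tendsto (fun N : ℕ =>
        (volume {p : ℝ × ℝ | 1 ≤ p.2 ∧ p.2 ≤ p.1 ∧ p.1 ≤ (N : ℝ) ∧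
            a * p.2 ^ m ≥ a * p.1 ^ m - b * (N : ℝ) ^ n}).toReal / (N : ℝ) ^ 2)
      atTop (nhds 0) := by
  change Tendsto (fun N : ℕ => (volume (powerGapRegion a b m n N)).toReal / (N : ℝ) ^ 2)
    atTop (𝓝 0)
  refine tendsto_order.2 ⟨fun δ hδ ↦ .of_forall fun N ↦ hδ.trans_le (by positivity),
    fun δ hδ ↦ ?_⟩
  set ε := √(δ / 2)
  have hε : 0 < ε := Real.sqrt_pos.2 (by positivity)
  have hε2 : ε ^ 2 = δ / 2 := Real.sq_sqrt (by positivity)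
  have hsmall := (tendsto_const_div_atTop_nhds_zero_nat (b / (a * ε ^ (m - 1)))).eventually_lt_const
    (half_pos hδ)
  filter_upwards [hsmall, eventually_ge_atTop 1] with N hC hN
  calc (volume (powerGapRegion a b m n N)).toReal / (N : ℝ) ^ 2
      ≤ ε ^ 2 + b / (a * ε ^ (m - 1)) / N :=
        volume_powerGapRegion_div_sq_le hmn ha hb (by exact_mod_cast hN) hε
    _ < δ := by linarith

theorem stmt_9 (m n : ℕ) (hmn : n < m) (hn : 1 ≤ n) (a b : ℝ) (ha : 0 < a) (hb : 0 ≤ b) :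
    Tendsto (fun N : ℕ =>
        (volume {p : ℝ × ℝ | 1 ≤ p.2 ∧ p.2 ≤ p.1 ∧ p.1 ≤ (N : ℝ) ∧
            a * p.2 ^ m ≥ a * p.1 ^ m - b * (N : ℝ) ^ n}).toReal / (N : ℝ) ^ 2)
      atTop (nhds 0) :=
  stmt_9_general m n hmn a b ha hb
end

section
/- For any link function L satisfying Property B with constant Δ = Δ(L), and any pair-matched word w of length 2k, the number of circuits π : {0,…,2k} → {1,…,N} with π(0) = π(2k) corresponding to w is at most N^{k+1} · Δᵏ. -/
/-!
Build a circuit one step at a time. The start point and each step at the first occurrence of a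
letter can go anywhere in `{1, …, N}`; a step at a repeated letter must reproduce the `L`-value of
the earlier step with that letter, and from its (already fixed) starting point Property B leaves at
most `Δ` choices. A pair-matched word of length `2k` has `k` letters, hence `k` steps of each kind.
-/

open Finset

section PrefixCounting

variable {α : Type*} [DecidableEq α]

theorem Fin.forall_le_castSucc_iff {n : ℕ} {p : Fin (n + 2) → Prop} (i : Fin (n + 1)) :
    (∀ j ≤ i.castSucc, p j) ↔ ∀ j ≤ i, p j.castSucc := by
  refine ⟨fun h j hj => h _ (Fin.castSucc_le_castSucc_iff.mpr hj), fun h j hj => ?_⟩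
  obtain ⟨j, rfl⟩ := Fin.exists_castSucc_eq.mpr (hj.trans_lt (Fin.castSucc_lt_last i)).ne
  exact h j (Fin.castSucc_le_castSucc_iff.mp hj)

theorem card_le_mul_prod_of_card_extensions_le {n : ℕ} (S : Finset (Fin (n + 1) → α)) (a : ℕ)
    (b : Fin n → ℕ) (h0 : #(S.image (· 0)) ≤ a)
    (hstep : ∀ i : Fin n, ∀ f ∈ S,
      #((S.filter fun g => ∀ j ≤ i.castSucc, g j = f j).image (· i.succ)) ≤ b i) :
    #S ≤ a * ∏ i, b i := by
  induction n generalizing a with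
  | zero =>
    have hinj : Function.Injective fun f : Fin 1 → α => f 0 := fun f g h =>
      funext fun j => by rwa [Subsingleton.elim j 0]
    simpa [card_image_of_injective S hinj] using h0
  | succ n ih =>
    have hinit : #(S.image Fin.init) ≤ a * ∏ i : Fin n, b i.castSucc := by
      refine ih _ a _ (by simpa [image_image, Function.comp_def, Fin.init] using h0) ?_
      simp only [mem_image, forall_exists_index, and_imp]
      rintro i _ f hf rfl
      refine (card_le_card fun x hx => ?_).trans (hstep i.castSucc f hf)
      simp only [mem_image, mem_filter] at hx ⊢
      obtain ⟨_, ⟨⟨g, hg, rfl⟩, hgf⟩, rfl⟩ := hx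
      exact ⟨g, ⟨hg, (Fin.forall_le_castSucc_iff _).mpr hgf⟩, rfl⟩
    have hfibre : ∀ p ∈ S.image Fin.init, #{g ∈ S | Fin.init g = p} ≤ b (Fin.last n) := by
      simp only [mem_image, forall_exists_index, and_imp]
      rintro _ f hf rfl
      calc #{g ∈ S | Fin.init g = Fin.init f}
          = #({g ∈ S | Fin.init g = Fin.init f}.image (· (Fin.last n).succ)) := by
            refine (card_image_of_injOn fun g hg g' hg' h => ?_).symm
            simp only [coe_filter, Set.mem_ofPred_eq] at hg hg'
            rw [← Fin.snoc_init_self g, ← Fin.snoc_init_self g', hg.2, hg'.2]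
            simpa using h
        _ ≤ #((S.filter fun g => ∀ j ≤ (Fin.last n).castSucc, g j = f j).image
              (· (Fin.last n).succ)) := by
            refine card_le_card (image_subset_image fun g hg => ?_)
            simp only [mem_filter] at hg ⊢
            exact ⟨hg.1, (Fin.forall_le_castSucc_iff _).mpr fun j _ => congrFun hg.2 j⟩
        _ ≤ b (Fin.last n) := hstep _ f hf
    calc #S ≤ b (Fin.last n) * #(S.image Fin.init) := card_le_mul_card_image S _ hfibre
      _ ≤ b (Fin.last n) * (a * ∏ i : Fin n, b i.castSucc) := Nat.mul_le_mul_left _ hinit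
      _ = a * ∏ i, b i := by rw [Fin.prod_univ_castSucc]; ring

end PrefixCounting

section Words

variable {A : Type*} [DecidableEq A] {n : ℕ}

theorem card_filter_forall_lt_ne_eq_card_image (w : Fin n → A) :
    #{i | ∀ j < i, w j ≠ w i} = #(univ.image w) := by
  refine card_nbij w (fun i _ => by simp) (fun i hi i' hi' h => ?_) fun a ha => ?_
  · simp only [coe_filter, mem_univ, true_and, Set.mem_ofPred_eq] at hi hi'
    rcases lt_trichotomy i i' with hlt | heq | hgt
    · exact absurd h (hi' i hlt)
    · exact heq
    · exact absurd h.symm (hi i' hgt)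
  · obtain ⟨i, -, rfl⟩ := mem_image.mp ha
    obtain ⟨m, hm, hmin⟩ := exists_min_image {j | w j = w i} id ⟨i, by simp⟩
    simp only [mem_filter, mem_univ, true_and, id] at hm hmin
    refine ⟨m, ?_, hm⟩
    simp only [coe_filter, mem_univ, true_and, Set.mem_ofPred_eq]
    exact fun j hj hw => (hmin j (hw.trans hm)).not_gt hj

theorem two_mul_card_image_eq_of_card_fibre_eq_two (w : Fin n → A)
    (hpair : ∀ i, #{j | w j = w i} = 2) : 2 * #(univ.image w) = n := by
  have hfibre : ∀ a ∈ univ.image w, #{j | w j = a} = 2 := by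
    simp only [mem_image, mem_univ, true_and, forall_exists_index]
    rintro _ i rfl
    exact hpair i
  calc 2 * #(univ.image w) = #(univ : Finset (Fin n)) := by
        rw [card_eq_sum_card_image w univ, sum_congr rfl hfibre, sum_const, smul_eq_mul, mul_comm]
    _ = n := card_fin n

end Words

def circuits (L : ℕ → ℕ → ℤ) (N : ℕ) {A : Type*} [DecidableEq A] {n : ℕ} (w : Fin n → A) :
    Finset (Fin (n + 1) → ℕ) :=
  (Fintype.piFinset fun _ => Icc 1 N).filter fun π => π 0 = π (Fin.last n) ∧
    ∀ i j : Fin n, (w i = w j ↔ L (π i.castSucc) (π i.succ) = L (π j.castSucc) (π j.succ))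

theorem card_circuits_le {L : ℕ → ℕ → ℤ} {N Δ : ℕ}
    (hB : ∀ x ∈ Icc 1 N, ∀ t, #{m ∈ Icc 1 N | L x m = t} ≤ Δ)
    {A : Type*} [DecidableEq A] {n : ℕ} (w : Fin n → A) :
    #(circuits L N w) ≤ N ^ (#(univ.image w) + 1) * Δ ^ (n - #(univ.image w)) := by
  have hmem : ∀ π ∈ circuits L N w, ∀ i, π i ∈ Icc 1 N := fun π hπ =>
    Fintype.mem_piFinset.mp (mem_filter.mp hπ).1
  have hfirst := card_filter_forall_lt_ne_eq_card_image w
  calc #(circuits L N w) ≤ N * ∏ i, if ∀ j < i, w j ≠ w i then N else Δ := by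
        refine card_le_mul_prod_of_card_extensions_le _ _ _ ?_ fun i f hf => ?_
        · refine (card_le_card fun x hx => ?_).trans (Nat.card_Icc 1 N).le
          obtain ⟨π, hπ, rfl⟩ := mem_image.mp hx
          exact hmem π hπ 0
        split_ifs with hi
        · refine (card_le_card fun x hx => ?_).trans (Nat.card_Icc 1 N).le
          obtain ⟨π, hπ, rfl⟩ := mem_image.mp hx
          exact hmem π (mem_filter.mp hπ).1 _
        push Not at hi
        obtain ⟨j, hji, hw⟩ := hi
        refine (card_le_card fun x hx => ?_).trans
          (hB _ (hmem f hf i.castSucc) (L (f j.castSucc) (f j.succ)))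
        obtain ⟨π, hπ, rfl⟩ := mem_image.mp hx
        obtain ⟨hπc, hπf⟩ := mem_filter.mp hπ
        have hL := ((mem_filter.mp hπc).2.2 i j).mp hw.symm
        rw [hπf _ le_rfl, hπf _ (Fin.castSucc_le_castSucc_iff.mpr hji.le),
          hπf _ (Fin.succ_le_castSucc_iff.mpr hji)] at hL
        exact mem_filter.mpr ⟨hmem π hπc _, hL⟩
    _ = N ^ (#(univ.image w) + 1) * Δ ^ (n - #(univ.image w)) := by
        have hrest : #{i | ¬∀ j < i, w j ≠ w i} = n - #(univ.image w) := by
          have := card_filter_add_card_filter_not (s := univ) fun i : Fin n => ∀ j < i, w j ≠ w i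
          rw [card_univ, Fintype.card_fin] at this
          omega
        rw [prod_ite, prod_const, prod_const, hfirst, hrest]
        ring

theorem stmt_19_general (L : ℕ → ℕ → ℤ) (Δ : ℕ)
    (hB : ∀ (N : ℕ) (t : ℤ) (k : ℕ), 1 ≤ k → k ≤ N →
      ((Finset.Icc 1 N).filter (fun m => L k m = t)).card ≤ Δ)
    (k N : ℕ)
    (A : Type*) [DecidableEq A] (w : Fin (2 * k) → A)
    (hpair : ∀ i : Fin (2 * k), (Finset.univ.filter (fun j => w j = w i)).card = 2) :
    Nat.card {π : Fin (2 * k + 1) → ℕ //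
        (∀ i, π i ∈ Finset.Icc 1 N) ∧ π 0 = π (Fin.last (2 * k)) ∧
        ∀ i j : Fin (2 * k),
          (w i = w j ↔ L (π i.castSucc) (π i.succ) = L (π j.castSucc) (π j.succ))}
      ≤ N ^ (k + 1) * Δ ^ k := by
  have hletters : #(univ.image w) = k := by
    have := two_mul_card_image_eq_of_card_fibre_eq_two w hpair
    omega
  have hcircuits := card_circuits_le (L := L) (Δ := Δ)
    (fun x hx t => hB N t x (mem_Icc.mp hx).1 (mem_Icc.mp hx).2) w
  rw [hletters, show 2 * k - k = k by omega, ← Nat.card_eq_finsetCard] at hcircuits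
  refine le_of_eq_of_le (Nat.card_congr (Equiv.subtypeEquivRight fun π => ?_)) hcircuits
  simp [circuits, Fintype.mem_piFinset]

theorem stmt_19 (L : ℕ → ℕ → ℤ) (Δ : ℕ)
    (hB : ∀ (N : ℕ) (t : ℤ) (k : ℕ), 1 ≤ k → k ≤ N →
      ((Finset.Icc 1 N).filter (fun m => L k m = t)).card ≤ Δ)
    (k N : ℕ) (hN : 1 ≤ N)
    (A : Type*) [DecidableEq A] (w : Fin (2 * k) → A)
    (hpair : ∀ i : Fin (2 * k), (Finset.univ.filter (fun j => w j = w i)).card = 2) :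
    Nat.card {π : Fin (2 * k + 1) → ℕ //
        (∀ i, π i ∈ Finset.Icc 1 N) ∧ π 0 = π (Fin.last (2 * k)) ∧
        ∀ i j : Fin (2 * k),
          (w i = w j ↔ L (π i.castSucc) (π i.succ) = L (π j.castSucc) (π j.succ))}
      ≤ N ^ (k + 1) * Δ ^ k :=
  stmt_19_general L Δ hB k N A w hpair
end
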